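/- Consider one time step of the SVEIHR dynamics in a single region with no migration: S' = S - θS - ρ(1-h)S; V' = V + ρ(1-h)S - (1-ε)θV; E' = E + θS - αE; EV' = EV + (1-ε)θV - (α(p^{m,v} + p^{s,v}) + γ^v p^{r,v})·EV; Im' = Im + α p^m E + α p^{m,v} EV - γ^m Im; Is' = Is + α p^s E + α p^{s,v} EV - σ Is; Hs' = Hs + As - γ^s Hs; Hc' = Hc + Ac - (1-ς^c)μ^c Hc - ς^c γ^c Hc; R' = R + γ^v p^{r,v} EV + γ^m Im + γ^s Hs + ς^{ks} γ^{ks} Ks + ς^c γ^c Hc; D' = D + (1-ς^{ks})μ^{ks} Ks + (1-ς^c)μ^c Hc + Kc. Suppose all current compartment values S, V, E, EV, Im, Is, Hs, Hc, R, D and the quantities As, Ac, Ks, Kc are nonnegative; all parameters θ, ρ, h, ε, α, γ^v, γ^m, γ^s, γ^c, γ^{ks}, σ, μ^c, μ^{ks}, ς^c, ς^{ks}, p^m, p^s, p^{m,v}, p^{s,v}, p^{r,v} lie in [0,1]; and additionally θ + ρ(1-h) ≤ 1 and α(p^{m,v} + p^{s,v}) + γ^v p^{r,v} ≤ 1. Then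 all updated compartment values S', V', E', EV', Im', Is', Hs', Hc', R', D' are nonnegative. -/
import Mathlib


private lemma aux_out {x a b : ℝ} (hx : 0 ≤ x) (ha : 0 ≤ a) (hb : 0 ≤ b)
    (hab : a + b ≤ 1) : 0 ≤ x - a * x - b * x := by nlinarith

private lemma aux_one {x a : ℝ} (hx : 0 ≤ x) (ha0 : 0 ≤ a) (ha1 : a ≤ 1) :
    0 ≤ x - a * x := by nlinarith

/-- One time step of the SVEIHR dynamics preserves nonnegativity of all
compartments, provided all current compartment values and admission/denial
quantities are nonnegative, all parameters lie in `[0,1]`, and additionally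
`θ + ρ*(1-h) ≤ 1` and `α*(pmv + psv) + γv*prv ≤ 1`. -/
theorem sveihr_step_nonneg
    (S V E EV Im Is Hs Hc R D As Ac Ks Kc : ℝ)
    (θ ρ h ε α γv γm γs γc γks σ μc μks ςc ςks pm ps pmv psv prv : ℝ)
    (hS : 0 ≤ S) (hV : 0 ≤ V) (hE : 0 ≤ E) (hEV : 0 ≤ EV)
    (hIm : 0 ≤ Im) (hIs : 0 ≤ Is) (hHs : 0 ≤ Hs) (hHc : 0 ≤ Hc)
    (hR : 0 ≤ R) (hD : 0 ≤ D)
    (hAs : 0 ≤ As) (hAc : 0 ≤ Ac) (hKs : 0 ≤ Ks) (hKc : 0 ≤ Kc)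
    (hθ : θ ∈ Set.Icc (0:ℝ) 1) (hρ : ρ ∈ Set.Icc (0:ℝ) 1)
    (hh : h ∈ Set.Icc (0:ℝ) 1) (hε : ε ∈ Set.Icc (0:ℝ) 1)
    (hα : α ∈ Set.Icc (0:ℝ) 1) (hγv : γv ∈ Set.Icc (0:ℝ) 1)
    (hγm : γm ∈ Set.Icc (0:ℝ) 1) (hγs : γs ∈ Set.Icc (0:ℝ) 1)
    (hγc : γc ∈ Set.Icc (0:ℝ) 1) (hγks : γks ∈ Set.Icc (0:ℝ) 1)
    (hσ : σ ∈ Set.Icc (0:ℝ) 1) (hμc : μc ∈ Set.Icc (0:ℝ) 1)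
    (hμks : μks ∈ Set.Icc (0:ℝ) 1) (hςc : ςc ∈ Set.Icc (0:ℝ) 1)
    (hςks : ςks ∈ Set.Icc (0:ℝ) 1)
    (hpm : pm ∈ Set.Icc (0:ℝ) 1) (hps : ps ∈ Set.Icc (0:ℝ) 1)
    (hpmv : pmv ∈ Set.Icc (0:ℝ) 1) (hpsv : psv ∈ Set.Icc (0:ℝ) 1)
    (hprv : prv ∈ Set.Icc (0:ℝ) 1)
    (hSout : θ + ρ * (1 - h) ≤ 1)
    (hEVout : α * (pmv + psv) + γv * prv ≤ 1) :
    0 ≤ S - θ * S - ρ * (1 - h) * S ∧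
    0 ≤ V + ρ * (1 - h) * S - (1 - ε) * θ * V ∧
    0 ≤ E + θ * S - α * E ∧
    0 ≤ EV + (1 - ε) * θ * V - (α * (pmv + psv) + γv * prv) * EV ∧
    0 ≤ Im + α * pm * E + α * pmv * EV - γm * Im ∧
    0 ≤ Is + α * ps * E + α * psv * EV - σ * Is ∧
    0 ≤ Hs + As - γs * Hs ∧
    0 ≤ Hc + Ac - (1 - ςc) * μc * Hc - ςc * γc * Hc ∧
    0 ≤ R + γv * prv * EV + γm * Im + γs * Hs + ςks * γks * Ks + ςc * γc * Hc ∧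
    0 ≤ D + (1 - ςks) * μks * Ks + (1 - ςc) * μc * Hc + Kc := by
  obtain ⟨hθ0,hθ1⟩ := hθ
  obtain ⟨hρ0,hρ1⟩ := hρ
  obtain ⟨hh0,hh1⟩ := hh
  obtain ⟨hε0,hε1⟩ := hε
  obtain ⟨hα0,hα1⟩ := hα
  obtain ⟨hγv0,hγv1⟩ := hγv
  obtain ⟨hγm0,hγm1⟩ := hγm
  obtain ⟨hγs0,hγs1⟩ := hγs
  obtain ⟨hγc0,hγc1⟩ := hγc
  obtain ⟨hγks0,hγks1⟩ := hγks
  obtain ⟨hσ0,hσ1⟩ := hσ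
  obtain ⟨hμc0,hμc1⟩ := hμc
  obtain ⟨hμks0,hμks1⟩ := hμks
  obtain ⟨hςc0,hςc1⟩ := hςc
  obtain ⟨hςks0,hςks1⟩ := hςks
  obtain ⟨hpm0,hpm1⟩ := hpm
  obtain ⟨hps0,hps1⟩ := hps
  obtain ⟨hpmv0,hpmv1⟩ := hpmv
  obtain ⟨hpsv0,hpsv1⟩ := hpsv
  obtain ⟨hprv0,hprv1⟩ := hprv
  have h1h : (0:ℝ) ≤ 1 - h := by linarith
  have h1e : (0:ℝ) ≤ 1 - ε := by linarith
  have h1sc : (0:ℝ) ≤ 1 - ςc := by linarith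
  have h1sk : (0:ℝ) ≤ 1 - ςks := by linarith
  have hρh : 0 ≤ ρ * (1 - h) := mul_nonneg hρ0 h1h
  have hEVo0 : 0 ≤ α * (pmv + psv) + γv * prv := by positivity
  refine ⟨aux_out hS hθ0 hρh hSout, ?_, ?_, ?_, ?_, ?_, ?_, ?_, by positivity, by positivity⟩
  · have h2 : (1 - ε) * θ ≤ 1 := mul_le_one₀ (by linarith) hθ0 hθ1
    have := aux_one hV (mul_nonneg h1e hθ0) h2
    have := mul_nonneg hρh hS
    linarith
  · have := aux_one hE hα0 hα1
    have := mul_nonneg hθ0 hS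
    linarith
  · have := aux_one hEV hEVo0 hEVout
    have := mul_nonneg (mul_nonneg h1e hθ0) hV
    linarith
  · have := aux_one hIm hγm0 hγm1
    have := mul_nonneg (mul_nonneg hα0 hpm0) hE
    have := mul_nonneg (mul_nonneg hα0 hpmv0) hEV
    linarith
  · have := aux_one hIs hσ0 hσ1
    have := mul_nonneg (mul_nonneg hα0 hps0) hE
    have := mul_nonneg (mul_nonneg hα0 hpsv0) hEV
    linarith
  · have := aux_one hHs hγs0 hγs1
    linarith
  · have hA : (1 - ςc) * μc ≤ 1 - ςc := mul_le_of_le_one_right h1sc hμc1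
    have hB : ςc * γc ≤ ςc := mul_le_of_le_one_right hςc0 hγc1
    have hsum : (1 - ςc) * μc + ςc * γc ≤ 1 := by linarith
    have := aux_out hHc (mul_nonneg h1sc hμc0) (mul_nonneg hςc0 hγc0) hsum
    linarith [mul_assoc (1 - ςc) μc Hc, mul_assoc ςc γc Hc]
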